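/- arXiv:2505.02622 — 5 statements merged into one kernel-verified Lean document; each statement's English description precedes it below -/
import Mathlib

section
/- Let π be a permutation of Fin n, x : Fin n → Bool a bitstring, l, i : Fin n, and k : ℕ. Assume: (a) for every position p < l, x is constant on the π-cycle of p, i.e. x (π^m p) = x p for all m : ℕ; (b) π^k l = i; (c) x i = false; (d) x (π i) = true. Then toLex (x ∘ π^k) < toLex (x ∘ π^(k+1)); in particular x ∘ π^k is a local lexicographic minimum with respect to the single generator π, so for one permutation a local optimum can be constructed explicitly. -/
/-- For a single permutation `π`, a local lexicographic minimum can be constructed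
explicitly: if `x` is constant on the `π`-cycle of every position `p < l`,
`π^k l = i`, `x i = false` and `x (π i) = true`, then
`x ∘ π^k` is lexicographically strictly smaller than `x ∘ π^(k+1)`. -/
theorem one_perm_local_min (n : ℕ) (π : Equiv.Perm (Fin n)) (x : Fin n → Bool)
    (l i : Fin n) (k : ℕ)
    (ha : ∀ p : Fin n, p < l → ∀ m : ℕ, x ((π ^ m) p) = x p)
    (hb : (π ^ k) l = i)
    (hc : x i = false)
    (hd : x (π i) = true) :
    toLex (x ∘ ⇑(π ^ k)) < toLex (x ∘ ⇑(π ^ (k + 1))) := by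
  refine ⟨l, fun j hj => ?_, ?_⟩
  · show x ((π ^ k) j) = x ((π ^ (k + 1)) j)
    rw [ha j hj k, ha j hj (k + 1)]
  · show x ((π ^ k) l) < x ((π ^ (k + 1)) l)
    rw [hb, pow_succ', Equiv.Perm.mul_apply, hb, hc, hd]
    exact Bool.false_lt_true
end

section
/- Let n : ℕ and p : Fin n → ℕ be injective with p i prime and p i > 2 for every i. Then for every function c : Fin n → Fin 3 there exists t : ℕ with t < ∏_{i : Fin n} p i such that col t (p i) = c i for all i. That is, the map sending a number t ∈ {0, …, (∏ᵢ pᵢ) − 1} to the 3-coloring i ↦ col t (p i) is surjective onto all 3-colorings of the n vertices. -/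
/-- The color of `t` modulo `q`: `0` if `t % q = 0`, `1` if `t % q = 1`,
and `2` otherwise. -/
def col (t q : ℕ) : Fin 3 :=
  if t % q = 0 then 0 else if t % q = 1 then 1 else 2

/-! Since every `p i` exceeds `2`, the color `k : Fin 3` is the color of the residue `k` itself, so
it suffices to prescribe the residues `t % p i = c i`, which the Chinese remainder theorem does
for distinct primes. -/

open scoped Function

theorem col_eq_of_mod_eq {t q : ℕ} {k : Fin 3} (h : t % q = k) : col t q = k := by
  unfold col
  rw [h]
  fin_cases k <;> rfl

theorem Nat.exists_lt_prod_modEq {ι : Type*} [Fintype ι] (m : ι → ℕ) (hm : ∀ i, m i ≠ 0)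
    (hco : Pairwise (Nat.Coprime on m)) (a : ι → ℕ) :
    ∃ t < ∏ i, m i, ∀ i, t ≡ a i [MOD m i] := by
  have hm' : ∀ i ∈ Finset.univ, m i ≠ 0 := fun i _ => hm i
  have hco' : Set.Pairwise (Finset.univ : Finset ι) (Nat.Coprime on m) := fun _ _ _ _ => @hco _ _
  exact ⟨Nat.chineseRemainderOfFinset a m _ hm' hco',
    Nat.chineseRemainderOfFinset_lt_prod a m hm' hco',
    fun i => (Nat.chineseRemainderOfFinset a m _ hm' hco').2 i (Finset.mem_univ i)⟩

theorem Nat.pairwise_coprime_of_injective_prime {ι : Type*} {p : ι → ℕ} (hp : Function.Injective p)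
    (hprime : ∀ i, (p i).Prime) : Pairwise (Nat.Coprime on p) :=
  fun i j hij => (Nat.coprime_primes (hprime i) (hprime j)).2 (hp.ne hij)

/-- For pairwise distinct odd primes `p i`, every 3-coloring `c` of the `n`
vertices is realized as `i ↦ col t (p i)` for some `t < ∏ i, p i`. -/
theorem col_surjective (n : ℕ) (p : Fin n → ℕ) (hp : Function.Injective p)
    (hprime : ∀ i, (p i).Prime) (hbig : ∀ i, 2 < p i) (c : Fin n → Fin 3) :
    ∃ t : ℕ, t < ∏ i : Fin n, p i ∧ ∀ i : Fin n, col t (p i) = c i := by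
  obtain ⟨t, ht, hmod⟩ := Nat.exists_lt_prod_modEq p (fun i => (hprime i).ne_zero)
    (Nat.pairwise_coprime_of_injective_prime hp hprime) (fun i => c i)
  refine ⟨t, ht, fun i => col_eq_of_mod_eq ?_⟩
  rw [hmod i, Nat.mod_eq_of_lt ((c i).isLt.trans_le (hbig i))]
end

section
/- Let G be a simple graph on Fin n and let p : Fin n → ℕ be injective with p i prime and p i > 2 for all i. Then G is properly 3-colorable — there exists c : Fin n → Fin 3 with c u ≠ c v whenever G.Adj u v — if and only if there exists t : ℕ such that col t (p u) ≠ col t (p v) for every adjacent pair u, v of G. (This is the correctness of the reduction from 3-Colorability to the Disjunctive Chinese Remainder problem.) -/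
/-- Correctness of the reduction from 3-Colorability to disjunctive Chinese
remaindering: `G` is properly 3-colorable iff some `t : ℕ` assigns different
colors `col t (p u) ≠ col t (p v)` to all adjacent pairs. -/
theorem three_colorable_iff_dcr (n : ℕ) (G : SimpleGraph (Fin n))
    (p : Fin n → ℕ) (hp : Function.Injective p)
    (hprime : ∀ i, (p i).Prime) (hbig : ∀ i, 2 < p i) :
    (∃ c : Fin n → Fin 3, ∀ u v : Fin n, G.Adj u v → c u ≠ c v) ↔
      (∃ t : ℕ, ∀ u v : Fin n, G.Adj u v → col t (p u) ≠ col t (p v)) := by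
  constructor
  · rintro ⟨c, hc⟩
    obtain ⟨t, ht⟩ := Nat.chineseRemainderOfFinset (fun i => (c i : ℕ)) p Finset.univ
      (fun i _ => (hprime i).ne_zero)
      (fun i _ j _ hij => (Nat.coprime_primes (hprime i) (hprime j)).2 (fun h => hij (hp h)))
    have key : ∀ i, col t (p i) = c i := by
      intro i
      have hm : t % p i = (c i : ℕ) := by
        have h := ht i (Finset.mem_univ i)
        unfold Nat.ModEq at h
        have hlt : (c i : ℕ) < p i := by have := (c i).2; have := hbig i; omega
        rwa [Nat.mod_eq_of_lt hlt] at h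
      unfold col
      rw [hm]
      have hv : (c i : ℕ) = 0 ∨ (c i : ℕ) = 1 ∨ (c i : ℕ) = 2 := by omega
      rcases hv with h | h | h <;> simp [h, Fin.ext_iff]
    exact ⟨t, fun u v huv => by rw [key u, key v]; exact hc u v huv⟩
  · rintro ⟨t, ht⟩
    exact ⟨fun i => col t (p i), ht⟩
end

section
/- Let G be a simple graph on Fin n and let p : Fin n → ℕ be injective with p i prime and p i > 2 for all i. For each adjacent pair u, v of G let S(u,v) be the set of residues c ∈ Finset.range (p u * p v) with (c % p u = 0 ∧ c % p v = 0) ∨ (c % p u = 1 ∧ c % p v = 1) ∨ (2 ≤ c % p u ∧ 2 ≤ c % p v). Then G is properly 3-colorable if and only if there exists t : ℕ such that for every adjacent pair u, v of G, t % (p u * p v) ∉ S(u,v). That is, 3-Colorability is equivalent to solvability of the associated disjunctive Chinese remainder system with one constraint per edge. -/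
/-- Correctness of the reduction from 3-Colorability to the disjunctive Chinese
remainder system with one constraint per edge: `G` is properly 3-colorable iff
some `t : ℕ` avoids, for each edge `{u, v}`, the forbidden residues `S(u,v)`
modulo `p u * p v`. -/
theorem three_colorable_iff_dcr_system (n : ℕ) (G : SimpleGraph (Fin n))
    (p : Fin n → ℕ) (hp : Function.Injective p)
    (hprime : ∀ i, (p i).Prime) (hbig : ∀ i, 2 < p i) :
    (∃ c : Fin n → Fin 3, ∀ u v : Fin n, G.Adj u v → c u ≠ c v) ↔
      (∃ t : ℕ, ∀ u v : Fin n, G.Adj u v →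
        t % (p u * p v) ∉ (Finset.range (p u * p v)).filter (fun c =>
          (c % p u = 0 ∧ c % p v = 0) ∨ (c % p u = 1 ∧ c % p v = 1) ∨
            (2 ≤ c % p u ∧ 2 ≤ c % p v))) := by
  have hpos : ∀ i, 0 < p i := fun i => lt_trans (by norm_num) (hbig i)
  constructor
  · rintro ⟨c, hc⟩
    -- build t by CRT with t ≡ c i (mod p i)
    obtain ⟨t, ht⟩ := Nat.chineseRemainderOfFinset (fun i => (c i : ℕ)) p Finset.univ
      (fun i _ => (hpos i).ne') (fun u _ v _ huv =>
        (Nat.coprime_primes (hprime u) (hprime v)).mpr (fun h => huv (hp h)))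
    have hmod : ∀ i, t % p i = (c i : ℕ) := by
      intro i
      have h3 : (c i : ℕ) < p i := by have := (c i).isLt; have := hbig i; omega
      have := ht i (Finset.mem_univ i)
      simpa [Nat.ModEq, Nat.mod_eq_of_lt h3] using this
    refine ⟨t, fun u v huv hmem => ?_⟩
    have hmem' := (Finset.mem_filter.mp hmem).2
    have hu : t % (p u * p v) % p u = (c u : ℕ) := by
      rw [Nat.mod_mod_of_dvd _ ⟨p v, rfl⟩, hmod]
    have hv : t % (p u * p v) % p v = (c v : ℕ) := by
      rw [Nat.mod_mod_of_dvd _ ⟨p u, Nat.mul_comm _ _⟩, hmod]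
    rw [hu, hv] at hmem'
    have hne := hc u v huv
    have hu3 : (c u : ℕ) < 3 := (c u).isLt
    have hv3 : (c v : ℕ) < 3 := (c v).isLt
    rcases hmem' with ⟨h1, h2⟩ | ⟨h1, h2⟩ | ⟨h1, h2⟩ <;>
      exact hne (Fin.ext (by omega))
  · rintro ⟨t, ht⟩
    refine ⟨fun i => if t % p i = 0 then 0 else if t % p i = 1 then 1 else 2,
      fun u v huv => ?_⟩
    have h := ht u v huv
    have hlt : t % (p u * p v) < p u * p v :=
      Nat.mod_lt _ (Nat.mul_pos (hpos u) (hpos v))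
    have hu : t % (p u * p v) % p u = t % p u :=
      Nat.mod_mod_of_dvd _ ⟨p v, rfl⟩
    have hv : t % (p u * p v) % p v = t % p v :=
      Nat.mod_mod_of_dvd _ ⟨p u, Nat.mul_comm _ _⟩
    simp only [Finset.mem_filter, Finset.mem_range, hu, hv, not_and, not_or] at h
    have h' := h hlt
    push_neg at h'
    obtain ⟨h1, h2, h3⟩ := h'
    intro hcc
    by_cases hu0 : t % p u = 0 <;> by_cases hu1 : t % p u = 1 <;>
      by_cases hv0 : t % p v = 0 <;> by_cases hv1 : t % p v = 1 <;>
      simp_all <;> omega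
end

section
/- Fix l : ℕ and m : Fin l → ℕ with m i > 0 for all i, define V = Σ i : Fin l, ZMod (m i), π ⟨i, a⟩ = ⟨i, a - 1⟩, and x ⟨i, a⟩ = true iff a = 0, and let S : Π i : Fin l, Finset (ZMod (m i)) be sets of forbidden remainders. Then (∃ t : ℕ, ∀ i, (t : ZMod (m i)) ∉ S i) if and only if (∃ t : ℕ, ∀ i, ∀ a ∈ S i, (x ∘ π^t) ⟨i, a⟩ = false). That is, the disjunctive Chinese remainder system 't avoids the forbidden residues S i modulo m i for all i' is solvable exactly when some power of the single permutation π carries x to a bitstring with no 1 in any forbidden position (the correctness of the reduction of DCR to lexicographic minimization over one permutation). -/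
/-- The permutation of `Σ i, ZMod (m i)` that rotates each summand by `-1`:
`π ⟨i, a⟩ = ⟨i, a - 1⟩`; it has one cycle of length `m i` on each summand. -/
def cyclePerm (l : ℕ) (m : Fin l → ℕ) : Equiv.Perm (Σ i : Fin l, ZMod (m i)) where
  toFun := fun v => ⟨v.1, v.2 - 1⟩
  invFun := fun v => ⟨v.1, v.2 + 1⟩
  left_inv := by rintro ⟨i, a⟩; simp
  right_inv := by rintro ⟨i, a⟩; simp

/-- The bitstring on `Σ i, ZMod (m i)` with exactly one `1` in each cycle, at the
element labeled `0`. -/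
def oneString (l : ℕ) (m : Fin l → ℕ) : (Σ i : Fin l, ZMod (m i)) → Bool :=
  fun v => decide (v.2 = 0)


lemma cyclePerm_pow (l : ℕ) (m : Fin l → ℕ) (t : ℕ) (i : Fin l) (a : ZMod (m i)) :
    (cyclePerm l m ^ t) ⟨i, a⟩ = ⟨i, a - t⟩ := by
  induction t generalizing a with
  | zero => simp
  | succ n ih =>
      rw [pow_succ, Equiv.Perm.mul_apply]
      show (cyclePerm l m ^ n) ⟨i, a - 1⟩ = _
      rw [ih]
      congr 1
      push_cast
      ring

/-- Correctness of the reduction of disjunctive Chinese remaindering to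
lexicographic minimization over one permutation: the DCR system is solvable iff
some power of the rotation permutation carries `oneString` to a bitstring with
no `1` at any forbidden position. -/
theorem dcr_iff_orbit_avoids (l : ℕ) (m : Fin l → ℕ) (hm : ∀ i, 0 < m i)
    (S : ∀ i : Fin l, Finset (ZMod (m i))) :
    (∃ t : ℕ, ∀ i : Fin l, (t : ZMod (m i)) ∉ S i) ↔
      (∃ t : ℕ, ∀ i : Fin l, ∀ a ∈ S i,
        (oneString l m ∘ ⇑(cyclePerm l m ^ t)) ⟨i, a⟩ = false) := by
  constructor
  · rintro ⟨t, ht⟩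
    refine ⟨t, fun i a ha => ?_⟩
    rw [Function.comp_apply, cyclePerm_pow]
    simp only [oneString, decide_eq_false_iff_not, sub_eq_zero]
    rintro rfl; exact ht i ha
  · rintro ⟨t, ht⟩
    refine ⟨t, fun i hi => ?_⟩
    have := ht i _ hi
    rw [Function.comp_apply, cyclePerm_pow] at this
    simp [oneString, sub_eq_zero] at this
end
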